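/- arXiv:1507.05290 — 2 statements merged into one kernel-verified Lean document; each statement's English description precedes it below -/
import Mathlib

section
/- Let Y be a symmetric real 3×3 matrix with eigenvalues λ₁ ≥ λ₂ ≥ λ₃, put Z = Y − λ₂·I with eigenvalues λ₁' = λ₁ − λ₂, 0, λ₃' = λ₃ − λ₂. If λ₁' ≠ λ₃', then with e₂(x) = (exp(x) − 1 − x)/x² (extended by e₂(0) = 1/2), b = 1 − λ₁'λ₃'(e₂(λ₁') − e₂(λ₃'))/(λ₁' − λ₃'), and c = 1/2 + (λ₁'(2e₂(λ₁') − 1) − λ₃'(2e₂(λ₃') − 1))/(2(λ₁' − λ₃')), one has exp(Y) = exp(λ₂)·(I + b·Z + c·Z²). -/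
/-!
By Cayley–Hamilton, `Z = Y - λ₂ I` satisfies `Z³ = (a + c) Z² - a c Z` with `a = λ₁'`, `c = λ₃'`.
Inductively `(a - c) Z^(n+2) = (a^(n+1) - c^(n+1)) Z² - a c (a^n - c^n) Z`, so the exponential
series of `Z` collapses onto `1, Z, Z²`, and its coefficients are sums of the scalar series
`∑ xⁿ / (n+2)! = e₂(x)` at `x = a, c`. Finally `exp Y = exp λ₂ · exp Z` because `λ₂ I` is central.
-/

open Matrix Polynomial

noncomputable def e2 (x : ℝ) : ℝ := if x = 0 then 1/2 else (Real.exp x - 1 - x) / x ^ 2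

open Nat NormedSpace

theorem hasSum_pow_div_factorial_add_two (x : ℝ) :
    HasSum (fun n : ℕ => x ^ n / (n + 2)!) (e2 x) := by
  rcases eq_or_ne x 0 with rfl | hx
  · rw [e2, if_pos rfl]
    convert hasSum_single (f := fun n : ℕ => (0 : ℝ) ^ n / (n + 2)!) 0 _ using 1
    · norm_num [Nat.factorial]
    · intro n hn
      simp [zero_pow hn]
  · have h := ((hasSum_nat_add_iff' 2).2 (expSeries_div_hasSum_exp x)).div_const (x ^ 2)
    have hsum : (exp x - 1 - x) / x ^ 2
        = (exp x - ∑ i ∈ Finset.range 2, x ^ i / i !) / x ^ 2 := by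
      simp [Finset.sum_range_succ, sub_sub]
    rw [e2, if_neg hx, Real.exp_eq_exp_ℝ, hsum]
    exact h.congr_fun fun n => by rw [pow_add]; field_simp

section CubicRelation

variable {A : Type*} [Ring A] [Algebra ℝ A] {Z : A} {a c : ℝ}

theorem smul_pow_add_two_of_pow_three_eq (hZ : Z ^ 3 = (a + c) • Z ^ 2 - (a * c) • Z) (n : ℕ) :
    (a - c) • Z ^ (n + 2)
      = (a ^ (n + 1) - c ^ (n + 1)) • Z ^ 2 - (a * c * (a ^ n - c ^ n)) • Z := by
  induction n with
  | zero => simp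
  | succ n ih =>
    rw [pow_succ, ← smul_mul_assoc, ih, sub_mul, smul_mul_assoc, smul_mul_assoc, ← pow_succ,
      ← sq, hZ]
    module

theorem exp_eq_of_pow_three_eq [TopologicalSpace A] [IsTopologicalRing A] [ContinuousSMul ℝ A]
    [T2Space A] (hac : a ≠ c) (hZ : Z ^ 3 = (a + c) • Z ^ 2 - (a * c) • Z) :
    exp Z = 1 + (1 - a * c * (e2 a - e2 c) / (a - c)) • Z
      + ((a * e2 a - c * e2 c) / (a - c)) • Z ^ 2 := by
  have hac' : a - c ≠ 0 := sub_ne_zero.2 hac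
  have hlin : HasSum (fun n : ℕ => (a * c * (a ^ n - c ^ n) / (a - c)) / (n + 2)!)
      (a * c * (e2 a - e2 c) / (a - c)) :=
    ((((hasSum_pow_div_factorial_add_two a).sub (hasSum_pow_div_factorial_add_two c)).mul_left
      (a * c)).div_const (a - c)).congr_fun fun n => by ring
  have hsq : HasSum (fun n : ℕ => ((a ^ (n + 1) - c ^ (n + 1)) / (a - c)) / (n + 2)!)
      ((a * e2 a - c * e2 c) / (a - c)) :=
    ((((hasSum_pow_div_factorial_add_two a).mul_left a).sub
      ((hasSum_pow_div_factorial_add_two c).mul_left c)).div_const (a - c)).congr_fun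
      fun n => by ring
  have hval : 1 + (1 - a * c * (e2 a - e2 c) / (a - c)) • Z
      + ((a * e2 a - c * e2 c) / (a - c)) • Z ^ 2 - ∑ i ∈ Finset.range 2, ((i ! : ℝ)⁻¹) • Z ^ i
      = ((a * e2 a - c * e2 c) / (a - c)) • Z ^ 2 - (a * c * (e2 a - e2 c) / (a - c)) • Z := by
    simp [Finset.sum_range_succ]
    module
  rw [exp_eq_tsum ℝ]
  refine HasSum.tsum_eq ((hasSum_nat_add_iff' 2).1 ?_)
  rw [hval]
  refine ((hsq.smul_const (Z ^ 2)).sub (hlin.smul_const Z)).congr_fun fun n => ?_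
  rw [← inv_smul_smul₀ hac' (Z ^ (n + 2)), smul_pow_add_two_of_pow_three_eq hZ n]
  module

end CubicRelation

section Matrix

variable {n : Type*} [Fintype n] [DecidableEq n]

theorem Matrix.pow_three_eq_of_charpoly_eq (Y : Matrix n n ℝ) (l1 l2 l3 : ℝ)
    (hchar : Y.charpoly = (X - C l1) * (X - C l2) * (X - C l3)) :
    (Y - l2 • 1) ^ 3 = ((l1 - l2) + (l3 - l2)) • (Y - l2 • 1) ^ 2
      - ((l1 - l2) * (l3 - l2)) • (Y - l2 • 1) := by
  have hpoly : Y.charpoly = (X - C l2) ^ 3 - ((l1 - l2) + (l3 - l2)) • (X - C l2) ^ 2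
      + ((l1 - l2) * (l3 - l2)) • (X - C l2) := by
    rw [hchar]
    simp only [smul_eq_C_mul, C_add, C_sub, C_mul]
    ring
  have h := aeval_self_charpoly Y
  rw [hpoly] at h
  simp only [map_add, map_sub, map_smul, map_pow, aeval_X, aeval_C,
    Algebra.algebraMap_eq_smul_one] at h
  exact eq_of_sub_eq_zero (by rw [← h]; abel)

theorem Matrix.exp_smul_one (t : ℝ) : exp (t • (1 : Matrix n n ℝ)) = Real.exp t • 1 := by
  rw [smul_one_eq_diagonal, exp_diagonal, Pi.exp_def, smul_one_eq_diagonal, Real.exp_eq_exp_ℝ]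

end Matrix

theorem exp_sym3_closed_formula_general (Y : Matrix (Fin 3) (Fin 3) ℝ)
    (l1 l2 l3 : ℝ)
    (hchar : Y.charpoly = (X - C l1) * (X - C l2) * (X - C l3))
    (Z : Matrix (Fin 3) (Fin 3) ℝ) (hZ : Z = Y - l2 • (1 : Matrix (Fin 3) (Fin 3) ℝ))
    (l1' l3' : ℝ) (h1 : l1' = l1 - l2) (h3 : l3' = l3 - l2) (hne : l1' ≠ l3')
    (b c : ℝ)
    (hb : b = 1 - l1' * l3' * (e2 l1' - e2 l3') / (l1' - l3'))
    (hc : c = 1/2 + (l1' * (2 * e2 l1' - 1) - l3' * (2 * e2 l3' - 1)) / (2 * (l1' - l3'))) :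
    NormedSpace.exp Y =
      Real.exp l2 • ((1 : Matrix (Fin 3) (Fin 3) ℝ) + b • Z + c • Z ^ 2) := by
  have hcube : Z ^ 3 = (l1' + l3') • Z ^ 2 - (l1' * l3') • Z := by
    rw [hZ, h1, h3]
    exact Y.pow_three_eq_of_charpoly_eq l1 l2 l3 hchar
  have hc' : c = (l1' * e2 l1' - l3' * e2 l3') / (l1' - l3') := by
    rw [hc]
    field_simp [sub_ne_zero.2 hne]
    ring
  rw [show Y = Z + l2 • 1 by rw [hZ, sub_add_cancel],
    Matrix.exp_add_of_commute _ _ ((Commute.one_right Z).smul_right l2), Matrix.exp_smul_one,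
    mul_smul_one, exp_eq_of_pow_three_eq hne hcube, hb, hc']

theorem exp_sym3_closed_formula (Y : Matrix (Fin 3) (Fin 3) ℝ) (hY : Yᵀ = Y)
    (l1 l2 l3 : ℝ) (hord : l1 ≥ l2 ∧ l2 ≥ l3)
    (hchar : Y.charpoly = (X - C l1) * (X - C l2) * (X - C l3))
    (Z : Matrix (Fin 3) (Fin 3) ℝ) (hZ : Z = Y - l2 • (1 : Matrix (Fin 3) (Fin 3) ℝ))
    (l1' l3' : ℝ) (h1 : l1' = l1 - l2) (h3 : l3' = l3 - l2) (hne : l1' ≠ l3')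
    (b c : ℝ)
    (hb : b = 1 - l1' * l3' * (e2 l1' - e2 l3') / (l1' - l3'))
    (hc : c = 1/2 + (l1' * (2 * e2 l1' - 1) - l3' * (2 * e2 l3' - 1)) / (2 * (l1' - l3'))) :
    NormedSpace.exp Y =
      Real.exp l2 • ((1 : Matrix (Fin 3) (Fin 3) ℝ) + b • Z + c • Z ^ 2) :=
  exp_sym3_closed_formula_general Y l1 l2 l3 hchar Z hZ l1' l3' h1 h3 hne b c hb hc
end

section
/- For a rotation matrix R ∈ SO(3) with tr(R) ≠ −1 and R ≠ I, setting θ = arccos((tr R − 1)/2) ∈ (0, π), the matrix X = (θ/(2 sin θ))·(R − Rᵀ) is antisymmetric and satisfies exp(X) = R. -/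
/-!
Since `Rᵀ = adj R`, Cayley–Hamilton makes `Rᵀ` a quadratic polynomial in `R`. Writing
`t = tr R` and `S = R - Rᵀ`, this gives `S² = (t + 1)(R + Rᵀ) - 2(t + 1)` and
`S³ = (t + 1)(t - 3) S`, so `R = 1 + S / 2 + S² / (2(t + 1))`. The bounds `-1 < t < 3`
come from `0 ≤ tr (Sᵀ S) = -tr (S²)` and `0 < tr ((R - 1)ᵀ (R - 1)) = 6 - 2t`.

As `4 sin² θ = (t + 1)(3 - t)`, the matrix `X` satisfies `X³ = -θ² X`. For such an `X`, the
even and odd parts of the exponential series are the cosine and sine series of `θ`, which gives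
Rodrigues' formula `exp X = 1 + (sin θ / θ) X + ((1 - cos θ) / θ²) X²`; comparing coefficients
with the expression of `R` in terms of `S` finishes the proof.
-/

open Matrix

open scoped Nat

section PowThree

variable {𝔸 : Type*} [Ring 𝔸] [Algebra ℝ 𝔸] {a : 𝔸} {θ : ℝ}

theorem pow_two_mul_add_one_of_pow_three (h : a ^ 3 = (-θ ^ 2) • a) (k : ℕ) :
    a ^ (2 * k + 1) = (-θ ^ 2) ^ k • a := by
  induction k with
  | zero => simp
  | succ k ih =>
    have h' : a * a ^ 2 = (-θ ^ 2) • a := by rw [← h, pow_succ' a 2]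
    rw [show 2 * (k + 1) + 1 = 2 * k + 1 + 2 by ring, pow_add, ih, smul_mul_assoc, h', smul_smul,
      pow_succ (-θ ^ 2) k]

theorem pow_two_mul_add_two_of_pow_three (h : a ^ 3 = (-θ ^ 2) • a) (k : ℕ) :
    a ^ (2 * k + 2) = (-θ ^ 2) ^ k • a ^ 2 := by
  rw [pow_succ, pow_two_mul_add_one_of_pow_three h, smul_mul_assoc, ← pow_two]

variable [TopologicalSpace 𝔸] [ContinuousSMul ℝ 𝔸]

theorem hasSum_odd_exp_terms_of_pow_three (hθ : θ ≠ 0) (h : a ^ 3 = (-θ ^ 2) • a) :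
    HasSum (fun k : ℕ => ((2 * k + 1)! : ℝ)⁻¹ • a ^ (2 * k + 1)) ((Real.sin θ / θ) • a) := by
  convert (Real.hasSum_sin θ).smul_const (θ⁻¹ • a) using 1
  · ext k
    rw [pow_two_mul_add_one_of_pow_three h, smul_smul, smul_smul]
    congr 1
    field_simp
    ring
  · rw [smul_smul, div_eq_mul_inv]

theorem hasSum_even_exp_terms_of_pow_three [IsTopologicalAddGroup 𝔸] (hθ : θ ≠ 0)
    (h : a ^ 3 = (-θ ^ 2) • a) :
    HasSum (fun k : ℕ => ((2 * k)! : ℝ)⁻¹ • a ^ (2 * k))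
      (1 + ((1 - Real.cos θ) / θ ^ 2) • a ^ 2) := by
  have hcos := (hasSum_nat_add_iff' 1).mpr (Real.hasSum_cos θ)
  have htail : HasSum (fun k : ℕ => ((2 * (k + 1))! : ℝ)⁻¹ • a ^ (2 * (k + 1)))
      (((1 - Real.cos θ) / θ ^ 2) • a ^ 2) := by
    convert hcos.smul_const (-(θ ^ 2)⁻¹ • a ^ 2) using 1
    · ext k
      rw [show 2 * (k + 1) = 2 * k + 2 by ring, pow_two_mul_add_two_of_pow_three h, smul_smul,
        smul_smul]
      congr 1
      field_simp
      ring
    · simp only [Finset.range_one, Finset.sum_singleton, smul_smul]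
      congr 1
      field_simp
      ring
  simpa [add_comm] using
    (hasSum_nat_add_iff (f := fun k : ℕ => ((2 * k)! : ℝ)⁻¹ • a ^ (2 * k)) 1).mp htail

theorem exp_eq_of_pow_three_eq_neg_sq_smul [IsTopologicalRing 𝔸] [T2Space 𝔸] (hθ : θ ≠ 0)
    (h : a ^ 3 = (-θ ^ 2) • a) :
    NormedSpace.exp a = 1 + (Real.sin θ / θ) • a + ((1 - Real.cos θ) / θ ^ 2) • a ^ 2 := by
  rw [NormedSpace.exp_eq_tsum ℝ, add_right_comm]
  exact (HasSum.even_add_odd (f := fun n => (n ! : ℝ)⁻¹ • a ^ n)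
    (hasSum_even_exp_terms_of_pow_three hθ h) (hasSum_odd_exp_terms_of_pow_three hθ h)).tsum_eq

end PowThree

/-- Cayley–Hamilton in dimension three, solved for the adjugate. -/
theorem Matrix.adjugate_fin_three_eq {α : Type*} [CommRing α] (A : Matrix (Fin 3) (Fin 3) α) :
    adjugate A = A * A - A.trace • A + (adjugate A).trace • 1 := by
  ext i j
  fin_cases i <;> fin_cases j <;>
    simp [adjugate_fin_three, mul_apply, Fin.sum_univ_three, trace_fin_three] <;> ring

theorem Matrix.adjugate_eq_transpose_of_orthogonal {n α : Type*} [Fintype n] [DecidableEq n]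
    [CommRing α] {A : Matrix n n α} (hA : Aᵀ * A = 1) (hdet : A.det = 1) : adjugate A = Aᵀ :=
  calc adjugate A = Aᵀ * (A * adjugate A) := by rw [← Matrix.mul_assoc, hA, Matrix.one_mul]
    _ = Aᵀ := by rw [mul_adjugate, hdet, one_smul, Matrix.mul_one]

theorem Matrix.trace_transpose_mul_self_nonneg {m n : Type*} [Fintype m] [Fintype n]
    (A : Matrix m n ℝ) : 0 ≤ (Aᵀ * A).trace := by
  simpa using (posSemidef_conjTranspose_mul_self A).trace_nonneg

theorem Matrix.trace_transpose_mul_self_pos {m n : Type*} [Fintype m] [Fintype n]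
    {A : Matrix m n ℝ} (hA : A ≠ 0) : 0 < (Aᵀ * A).trace := by
  refine (trace_transpose_mul_self_nonneg A).lt_of_ne' fun h => hA ?_
  rw [← conjTranspose_eq_transpose_of_trivial] at h
  exact trace_conjTranspose_mul_self_eq_zero_iff.mp h

theorem Matrix.trace_lt_card_of_orthogonal {n : Type*} [Fintype n] [DecidableEq n]
    {A : Matrix n n ℝ} (hA : Aᵀ * A = 1) (hne : A ≠ 1) : A.trace < Fintype.card n := by
  have h := trace_transpose_mul_self_pos (sub_ne_zero.mpr hne)
  have hexpand : (A - 1)ᵀ * (A - 1) = 1 + 1 - A - Aᵀ := by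
    rw [transpose_sub, transpose_one, sub_mul, mul_sub, mul_sub, hA, Matrix.mul_one,
      Matrix.one_mul, Matrix.one_mul]
    abel
  rw [hexpand, trace_sub, trace_sub, trace_add, trace_transpose, trace_one] at h
  linarith

section Rotation

variable {α : Type*} [CommRing α] {R : Matrix (Fin 3) (Fin 3) α}

theorem transpose_eq_of_rotation (hR : Rᵀ * R = 1) (hdet : R.det = 1) :
    Rᵀ = R * R - R.trace • R + R.trace • 1 := by
  simpa [adjugate_eq_transpose_of_orthogonal hR hdet] using adjugate_fin_three_eq R

theorem mul_self_eq_of_rotation (hR : Rᵀ * R = 1) (hdet : R.det = 1) :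
    R * R = Rᵀ + R.trace • R - R.trace • 1 := by
  rw [transpose_eq_of_rotation hR hdet]
  abel

theorem transpose_mul_self_eq_of_rotation (hR : Rᵀ * R = 1) (hdet : R.det = 1) :
    Rᵀ * Rᵀ = R + R.trace • Rᵀ - R.trace • 1 := by
  simpa using congrArg transpose (mul_self_eq_of_rotation hR hdet)

theorem sub_transpose_mul_self_of_rotation (hR : Rᵀ * R = 1) (hdet : R.det = 1) :
    (R - Rᵀ) * (R - Rᵀ) = (R.trace + 1) • (R + Rᵀ) - (2 * (R.trace + 1)) • 1 := by
  rw [sub_mul, mul_sub, mul_sub, mul_self_eq_of_rotation hR hdet,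
    transpose_mul_self_eq_of_rotation hR hdet, hR, mul_eq_one_comm.mp hR]
  module

theorem sub_transpose_pow_three_of_rotation (hR : Rᵀ * R = 1) (hdet : R.det = 1) :
    (R - Rᵀ) ^ 3 = ((R.trace + 1) * (R.trace - 3)) • (R - Rᵀ) := by
  have hsym : (R + Rᵀ) * (R - Rᵀ) = (R.trace - 1) • (R - Rᵀ) := by
    rw [add_mul, mul_sub, mul_sub, mul_self_eq_of_rotation hR hdet,
      transpose_mul_self_eq_of_rotation hR hdet, hR, mul_eq_one_comm.mp hR]
    module
  rw [pow_succ, pow_two, sub_transpose_mul_self_of_rotation hR hdet, sub_mul, smul_mul_assoc,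
    smul_mul_assoc, hsym, Matrix.one_mul]
  module

theorem trace_sub_transpose_mul_self_of_rotation (hR : Rᵀ * R = 1) (hdet : R.det = 1) :
    ((R - Rᵀ) * (R - Rᵀ)).trace = 2 * (R.trace + 1) * (R.trace - 3) := by
  rw [sub_transpose_mul_self_of_rotation hR hdet]
  simp only [trace_sub, trace_add, trace_smul, smul_eq_mul, trace_transpose, trace_one,
    Fintype.card_fin, Nat.cast_ofNat]
  ring

end Rotation

theorem trace_mem_Ioo_of_rotation {R : Matrix (Fin 3) (Fin 3) ℝ} (hR : Rᵀ * R = 1)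
    (hdet : R.det = 1) (htr : R.trace ≠ -1) (hne : R ≠ 1) : R.trace ∈ Set.Ioo (-1) 3 := by
  have hlt : R.trace < 3 := by simpa using trace_lt_card_of_orthogonal hR hne
  have hnonneg := trace_transpose_mul_self_nonneg (R - Rᵀ)
  rw [show (R - Rᵀ)ᵀ = -(R - Rᵀ) by simp, neg_mul, trace_neg,
    trace_sub_transpose_mul_self_of_rotation hR hdet] at hnonneg
  exact ⟨lt_of_le_of_ne (by nlinarith) htr.symm, hlt⟩

theorem eq_one_add_smul_sub_transpose_of_rotation {R : Matrix (Fin 3) (Fin 3) ℝ}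
    (hR : Rᵀ * R = 1) (hdet : R.det = 1) (htr : R.trace ≠ -1) :
    R = 1 + (2⁻¹ : ℝ) • (R - Rᵀ) + (2 * (R.trace + 1))⁻¹ • (R - Rᵀ) ^ 2 := by
  have ht : R.trace + 1 ≠ 0 := fun h => htr (eq_neg_of_add_eq_zero_left h)
  rw [pow_two, sub_transpose_mul_self_of_rotation hR hdet]
  match_scalars <;> field_simp <;> ring

theorem inverse_rodrigues (R : Matrix (Fin 3) (Fin 3) ℝ)
    (hR : Rᵀ * R = 1) (hdet : R.det = 1) (htr : R.trace ≠ -1) (hne : R ≠ 1)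
    (θ : ℝ) (hθ : θ = Real.arccos ((R.trace - 1) / 2))
    (X : Matrix (Fin 3) (Fin 3) ℝ) (hX : X = (θ / (2 * Real.sin θ)) • (R - Rᵀ)) :
    Xᵀ = -X ∧ NormedSpace.exp X = R := by
  obtain ⟨ht1, ht3⟩ := trace_mem_Ioo_of_rotation hR hdet htr hne
  have ht : R.trace + 1 ≠ 0 := by linarith
  have hcos : Real.cos θ = (R.trace - 1) / 2 := hθ ▸ Real.cos_arccos (by linarith) (by linarith)
  have hθ0 : 0 < θ := hθ ▸ Real.arccos_pos.mpr (by linarith)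
  have hsin : 0 < Real.sin θ :=
    Real.sin_pos_of_pos_of_lt_pi hθ0 (hθ ▸ Real.arccos_lt_pi.mpr (by linarith))
  have hsin_sq : 4 * Real.sin θ ^ 2 = (R.trace + 1) * (3 - R.trace) := by
    rw [Real.sin_sq, hcos]; ring
  refine ⟨by rw [hX, transpose_smul, transpose_sub, transpose_transpose, ← smul_neg, neg_sub], ?_⟩
  have hX3 : X ^ 3 = (-θ ^ 2) • X := by
    rw [hX, smul_pow, sub_transpose_pow_three_of_rotation hR hdet, smul_smul, smul_smul]
    congr 1
    field_simp
    linear_combination hsin_sq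
  rw [exp_eq_of_pow_three_eq_neg_sq_smul hθ0.ne' hX3, hX, smul_pow, smul_smul, smul_smul]
  conv_rhs => rw [eq_one_add_smul_sub_transpose_of_rotation hR hdet htr]
  congr 2
  · field_simp
  · rw [hcos]
    field_simp
    linear_combination -hsin_sq
end
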